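/- arXiv:1912.05436 — 5 statements merged into one kernel-verified Lean document; each statement's English description precedes it below -/
import Mathlib

section
/- Let σ : ℝ → ℝ be twice continuously differentiable with bounded second derivative, let R > 0 and a > 0, and let t ∈ ℝ satisfy σ'(t) ≠ 0. Define the one-neuron network f_id(x) = (R / σ'(t)) · (σ(x/R + t) − σ(t)). Then for every x ∈ [−a, a] one has |f_id(x) − x| ≤ (‖σ''‖_∞ · a²) / (2 · |σ'(t)|) · (1/R). -/
/-! `f_id x - x` is `R / σ'(t)` times the first-order Taylor remainder of `σ` at `t` with
increment `x / R`. By Lagrange's form this remainder is at most `‖σ''‖_∞ (x/R)² / 2`, and the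
factor `R` cancels one power of `1/R`. -/

open Real Set

/-- Supremum norm of a function `g : ℝ → ℝ`. -/
noncomputable def supNorm (g : ℝ → ℝ) : ℝ := ⨆ x : ℝ, |g x|

theorem abs_le_supNorm {g : ℝ → ℝ} (hg : ∃ B, ∀ x, |g x| ≤ B) (x : ℝ) : |g x| ≤ supNorm g := by
  obtain ⟨B, hB⟩ := hg
  exact le_ciSup ⟨B, by rintro _ ⟨y, rfl⟩; exact hB y⟩ x

theorem abs_sub_sub_deriv_mul_le {f : ℝ → ℝ} (hf : ContDiff ℝ 2 f) {M : ℝ}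
    (hM : ∀ x, |deriv (deriv f) x| ≤ M) (t u : ℝ) :
    |f u - f t - deriv f t * (u - t)| ≤ M / 2 * (u - t) ^ 2 := by
  rcases eq_or_ne t u with rfl | htu
  · simp
  obtain ⟨c, -, hc⟩ := taylor_mean_remainder_lagrange_iteratedDeriv htu hf.contDiffOn
  have htaylor : taylorWithinEval f 1 (uIcc t u) t u = f t + deriv f t * (u - t) := by
    rw [taylorWithinEval_succ, taylor_within_zero_eval, iteratedDerivWithin_one,
      (hf.differentiable two_ne_zero t).derivWithin (uniqueDiffOn_uIcc htu t left_mem_uIcc)]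
    simp [mul_comm]
  rw [sub_sub, ← htaylor, hc, iteratedDeriv_succ, iteratedDeriv_one]
  calc |deriv (deriv f) c * (u - t) ^ (1 + 1) / ((1 + 1).factorial : ℕ)|
      = |deriv (deriv f) c| / 2 * (u - t) ^ 2 := by
        rw [abs_div, abs_mul, abs_sq]; norm_num; ring
    _ ≤ M / 2 * (u - t) ^ 2 := by gcongr; exact hM c

theorem identity_network_approx_general (σ : ℝ → ℝ) (hσ : ContDiff ℝ 2 σ)
    (hbd : ∃ B : ℝ, ∀ x : ℝ, |deriv (deriv σ) x| ≤ B)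
    (R a t : ℝ) (hR : 0 < R) (ht : deriv σ t ≠ 0)
    (f_id : ℝ → ℝ)
    (hfid : ∀ x : ℝ, f_id x = (R / deriv σ t) * (σ (x / R + t) - σ t)) :
    ∀ x ∈ Set.Icc (-a) a,
      |f_id x - x| ≤ (supNorm (deriv (deriv σ)) * a ^ 2) / (2 * |deriv σ t|) * (1 / R) := by
  intro x hx
  set M := supNorm (deriv (deriv σ))
  set d := deriv σ t
  have hd : 0 < |d| := abs_pos.mpr ht
  have hremainder : |σ (x / R + t) - σ t - d * (x / R)| ≤ M / 2 * (x / R) ^ 2 := by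
    simpa using abs_sub_sub_deriv_mul_le hσ (abs_le_supNorm hbd) t (x / R + t)
  have hM : 0 ≤ M := (abs_nonneg _).trans (abs_le_supNorm hbd 0)
  have hx2 : x ^ 2 ≤ a ^ 2 := sq_le_sq' hx.1 hx.2
  calc |f_id x - x| = R / |d| * |σ (x / R + t) - σ t - d * (x / R)| := by
        rw [hfid, ← abs_of_pos hR, ← abs_div, ← abs_mul, abs_of_pos hR]
        congr 1
        field_simp
    _ ≤ R / |d| * (M / 2 * (x / R) ^ 2) := by gcongr
    _ = M * x ^ 2 / (2 * |d|) * (1 / R) := by field_simp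
    _ ≤ M * a ^ 2 / (2 * |d|) * (1 / R) := by gcongr

/-- approximation of the identity by a one-neuron network. -/
theorem identity_network_approx (σ : ℝ → ℝ) (hσ : ContDiff ℝ 2 σ)
    (hbd : ∃ B : ℝ, ∀ x : ℝ, |deriv (deriv σ) x| ≤ B)
    (R a t : ℝ) (hR : 0 < R) (ha : 0 < a) (ht : deriv σ t ≠ 0)
    (f_id : ℝ → ℝ)
    (hfid : ∀ x : ℝ, f_id x = (R / deriv σ t) * (σ (x / R + t) - σ t)) :
    ∀ x ∈ Set.Icc (-a) a,
      |f_id x - x| ≤ (supNorm (deriv (deriv σ)) * a ^ 2) / (2 * |deriv σ t|) * (1 / R) :=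
  identity_network_approx_general σ hσ hbd R a t hR ht f_id hfid
end

section
/- Let M ∈ ℕ, let σ : ℝ → [0,1] be 2-admissible with associated point t_σ, let t_{σ,id} ∈ ℝ satisfy σ'(t_{σ,id}) ≠ 0, let a > 0, and assume R ≥ (‖σ''‖_∞ · (M+1)) / (2·|σ'(t_{σ,id})|). Let y ∈ [−a, a] and let f_ReLU be the network f_ReLU(x) = f_mult(f_id(x), σ(R·x)) built from f_id(x) = (R/σ'(t_{σ,id}))·(σ(x/R + t_{σ,id}) − σ(t_{σ,id})) and the product-approximating network f_mult of a 2-admissible σ. Then the network f_{hat,y}(x) = f_ReLU((M/(2a))·(x−y) + 1) − 2·f_ReLU((M/(2a))·(x−y)) + f_ReLU((M/(2a))·(x−y) − 1) satisfies |f_{hat,y}(x) − (1 − (M/(2a))·|x−y|)₊| ≤ 1792 · (max{‖σ''‖_∞, ‖σ'''‖_∞, 1} / min{2·|σ'(t_{σ,id})|, |σ''(t_σ)|, 1}) · M³ · (1/R) for all x ∈ [−a, a]. -/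
open Real Set

/-- A function `σ : ℝ → [0,1]` is 2-admissible with associated point `tσ`. -/
def TwoAdmissible (σ : ℝ → ℝ) (tσ : ℝ) : Prop :=
  (∀ x : ℝ, σ x ∈ Set.Icc (0 : ℝ) 1) ∧ Monotone σ ∧ (∃ L : NNReal, LipschitzWith L σ) ∧
  ContDiff ℝ 3 σ ∧
  (∀ k : ℕ, k ≤ 3 → ∃ B : ℝ, ∀ x : ℝ, |iteratedDeriv k σ x| ≤ B) ∧
  deriv σ tσ ≠ 0 ∧ deriv (deriv σ) tσ ≠ 0 ∧
  (∀ y : ℝ, 0 < y → |σ y - 1| ≤ 1 / y) ∧ (∀ y : ℝ, y < 0 → |σ y| ≤ 1 / |y|)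

/-!
`f_id` is a difference quotient of `σ` at `t_{σ,id}`, so by Taylor's theorem it reproduces `x`
up to `‖σ''‖ x² / (2 |σ'(t_{σ,id})| R)`. In `f_mult` the constant and linear Taylor terms of the
four values of `σ` cancel and the quadratic ones add up to `x z`, so its error is a third-order
remainder, `O(‖σ'''‖ (|x| + |z|)³ / (|σ''(t_σ)| R))`. The decay of `σ` at `±∞` makes `x σ(R x)`
a `1/R`-approximation of `x₊`, and the lower bound on `R` keeps `f_id` within `2(M + 1)` on
`[-(M + 1), M + 1]`; together `f_ReLU` approximates `x₊` there up to `O((M + 1)³ / R)`. Finally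
`(1 - |v|)₊ = (v + 1)₊ - 2 v₊ + (v - 1)₊` with `v = M (x - y) / (2a) ∈ [-M, M]`.
-/

theorem abs_le_of_abs_deriv_le_mul_pow_of_nonneg {f f' : ℝ → ℝ}
    (hf : ∀ u, HasDerivAt f (f' u) u) (hf0 : f 0 = 0) {B : ℝ} {n : ℕ}
    (hbd : ∀ u, |f' u| ≤ B * |u| ^ n) {h : ℝ} (hh : 0 ≤ h) :
    |f h| ≤ B * h ^ (n + 1) / (n + 1) := by
  have hpow (u : ℝ) : HasDerivAt (fun u : ℝ => B * u ^ (n + 1) / (n + 1)) (B * u ^ n) u := by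
    refine (((hasDerivAt_pow (n + 1) u).const_mul B).div_const _).congr_deriv ?_
    push_cast
    field_simp
  exact image_norm_le_of_norm_deriv_right_le_deriv_boundary (a := 0) (b := h)
    (fun u _ => (hf u).continuousAt.continuousWithinAt) (fun u _ => (hf u).hasDerivWithinAt)
    (by simp [hf0]) hpow (fun u hu => by simpa [abs_of_nonneg hu.1] using hbd u) ⟨hh, le_rfl⟩

theorem abs_le_of_abs_deriv_le_mul_pow {f f' : ℝ → ℝ} (hf : ∀ u, HasDerivAt f (f' u) u)
    (hf0 : f 0 = 0) {B : ℝ} {n : ℕ} (hbd : ∀ u, |f' u| ≤ B * |u| ^ n) (h : ℝ) :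
    |f h| ≤ B * |h| ^ (n + 1) / (n + 1) := by
  rcases le_total 0 h with hh | hh
  · simpa [abs_of_nonneg hh] using abs_le_of_abs_deriv_le_mul_pow_of_nonneg hf hf0 hbd hh
  · have hneg := abs_le_of_abs_deriv_le_mul_pow_of_nonneg (f := fun u => f (-u))
      (f' := fun u => -f' (-u)) (fun u => by simpa using (hf (0 - u)).comp_const_sub 0 u)
      (by simpa using hf0) (fun u => by simpa using hbd (-u)) (neg_nonneg.2 hh)
    simpa [abs_of_nonpos hh] using hneg

theorem abs_sub_taylor₁_le {g g' g'' : ℝ → ℝ} (hg : ∀ x, HasDerivAt g (g' x) x)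
    (hg' : ∀ x, HasDerivAt g' (g'' x) x) {B : ℝ} (hB : ∀ x, |g'' x| ≤ B) (t h : ℝ) :
    |g (t + h) - g t - g' t * h| ≤ B * |h| ^ 2 / 2 := by
  have hlip (u : ℝ) : |g' (t + u) - g' t| ≤ B * |u| ^ 1 := by
    simpa using abs_le_of_abs_deriv_le_mul_pow (n := 0)
      (fun u => ((hg' (t + u)).comp_const_add t u).sub_const (g' t)) (by simp)
      (fun u => by simpa using hB (t + u)) u
  simpa [one_add_one_eq_two] using abs_le_of_abs_deriv_le_mul_pow (n := 1)
    (fun u => (((hg (t + u)).comp_const_add t u).sub_const (g t)).sub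
      ((hasDerivAt_id u).const_mul (g' t))) (by simp) (fun u => by simpa using hlip u) h

theorem abs_sub_taylor₂_le {g g' g'' g''' : ℝ → ℝ} (hg : ∀ x, HasDerivAt g (g' x) x)
    (hg' : ∀ x, HasDerivAt g' (g'' x) x) (hg'' : ∀ x, HasDerivAt g'' (g''' x) x) {B : ℝ}
    (hB : ∀ x, |g''' x| ≤ B) (t h : ℝ) :
    |g (t + h) - g t - g' t * h - g'' t * h ^ 2 / 2| ≤ B * |h| ^ 3 / 6 := by
  have hquad (u : ℝ) : HasDerivAt (fun u => g'' t * u ^ 2 / 2) (g'' t * u) u := by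
    refine (((hasDerivAt_pow 2 u).const_mul (g'' t)).div_const 2).congr_deriv ?_
    ring
  have hrem (u : ℝ) : |g' (t + u) - g' t - g'' t * u| ≤ B / 2 * |u| ^ 2 := by
    linarith [abs_sub_taylor₁_le hg' hg'' hB t u]
  have := abs_le_of_abs_deriv_le_mul_pow (n := 2)
    (fun u => ((((hg (t + u)).comp_const_add t u).sub_const (g t)).sub
      ((hasDerivAt_id u).const_mul (g' t))).sub (hquad u)) (by simp)
    (fun u => by simpa using hrem u) h
  norm_num at this ⊢
  linarith

namespace TwoAdmissible

variable {σ : ℝ → ℝ} {tσ : ℝ}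

theorem hasDerivAt_iterate_deriv (hσ : TwoAdmissible σ tσ) {k : ℕ} (hk : k < 3) (x : ℝ) :
    HasDerivAt (deriv^[k] σ) (deriv^[k + 1] σ x) x := by
  rw [Function.iterate_succ_apply', ← iteratedDeriv_eq_iterate]
  exact (hσ.2.2.2.1.differentiable_iteratedDeriv k (by exact_mod_cast hk) x).hasDerivAt

theorem abs_iterate_deriv_le_supNorm (hσ : TwoAdmissible σ tσ) {k : ℕ} (hk : k ≤ 3) (x : ℝ) :
    |deriv^[k] σ x| ≤ supNorm (deriv^[k] σ) := by
  rw [← iteratedDeriv_eq_iterate]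
  exact abs_le_supNorm (hσ.2.2.2.2.1 k hk) x

end TwoAdmissible

noncomputable def idNet (σ : ℝ → ℝ) (t R x : ℝ) : ℝ := R / deriv σ t * (σ (x / R + t) - σ t)

noncomputable def multNet (σ : ℝ → ℝ) (t R x z : ℝ) : ℝ :=
  R ^ 2 / (4 * deriv (deriv σ) t) *
    (σ (2 * (x + z) / R + t) - 2 * σ ((x + z) / R + t)
      - σ (2 * (x - z) / R + t) + 2 * σ ((x - z) / R + t))

noncomputable def reluNet (σ : ℝ → ℝ) (tσ tid R x : ℝ) : ℝ :=
  multNet σ tσ R (idNet σ tid R x) (σ (R * x))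

section Networks

variable {σ : ℝ → ℝ} {t R B : ℝ}

theorem abs_idNet_sub_le (hσ : ∀ x, HasDerivAt σ (deriv σ x) x)
    (hσ' : ∀ x, HasDerivAt (deriv σ) (deriv (deriv σ) x) x) (hB : ∀ x, |deriv (deriv σ) x| ≤ B)
    (ht : deriv σ t ≠ 0) (hR : 0 < R) (x : ℝ) :
    |idNet σ t R x - x| ≤ B * x ^ 2 / (2 * |deriv σ t| * R) := by
  have heq : idNet σ t R x - x = R / deriv σ t * (σ (t + x / R) - σ t - deriv σ t * (x / R)) := by
    rw [idNet, add_comm t]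
    field_simp
  calc |idNet σ t R x - x| = R / |deriv σ t| * |σ (t + x / R) - σ t - deriv σ t * (x / R)| := by
        rw [heq, abs_mul, abs_div, abs_of_pos hR]
    _ ≤ R / |deriv σ t| * (B * |x / R| ^ 2 / 2) := by
        gcongr
        exact abs_sub_taylor₁_le hσ hσ' hB t (x / R)
    _ = B * x ^ 2 / (2 * |deriv σ t| * R) := by
        rw [sq_abs]
        field_simp

theorem abs_multNet_sub_mul_le (hσ : ∀ x, HasDerivAt σ (deriv σ x) x)
    (hσ' : ∀ x, HasDerivAt (deriv σ) (deriv (deriv σ) x) x)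
    (hσ'' : ∀ x, HasDerivAt (deriv (deriv σ)) (deriv (deriv (deriv σ)) x) x)
    (hB : ∀ x, |deriv (deriv (deriv σ)) x| ≤ B) (ht : deriv (deriv σ) t ≠ 0) (hR : 0 < R)
    (x z : ℝ) :
    |multNet σ t R x z - x * z| ≤ 5 * B * (|x| + |z|) ^ 3 / (6 * |deriv (deriv σ) t| * R) := by
  set r : ℝ → ℝ := fun h => σ (t + h) - σ t - deriv σ t * h - deriv (deriv σ) t * h ^ 2 / 2
  set S := |x| + |z|
  have hr {w k : ℝ} (hw : |w| ≤ k) : |r (w / R)| ≤ B * k ^ 3 / (6 * R ^ 3) := by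
    calc |r (w / R)| ≤ B * |w / R| ^ 3 / 6 := abs_sub_taylor₂_le hσ hσ' hσ'' hB t (w / R)
      _ ≤ B * (k / R) ^ 3 / 6 := by
        have : 0 ≤ B := (abs_nonneg _).trans (hB 0)
        rw [abs_div, abs_of_pos hR]
        gcongr
      _ = B * k ^ 3 / (6 * R ^ 3) := by ring
  have hcomb : multNet σ t R x z - x * z = R ^ 2 / (4 * deriv (deriv σ) t) *
      (r (2 * (x + z) / R) - 2 * r ((x + z) / R) - r (2 * (x - z) / R) + 2 * r ((x - z) / R)) := by
    simp only [r, multNet, add_comm t]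
    field_simp
    ring
  have hadd : |x + z| ≤ S := abs_add_le x z
  have hsub : |x - z| ≤ S := abs_sub x z
  have hadd₂ : |2 * (x + z)| ≤ 2 * S := by rw [abs_mul, abs_two]; gcongr
  have hsub₂ : |2 * (x - z)| ≤ 2 * S := by rw [abs_mul, abs_two]; gcongr
  obtain ⟨h₁, h₁'⟩ := abs_le.mp (hr hadd₂)
  obtain ⟨h₂, h₂'⟩ := abs_le.mp (hr hadd)
  obtain ⟨h₃, h₃'⟩ := abs_le.mp (hr hsub₂)
  obtain ⟨h₄, h₄'⟩ := abs_le.mp (hr hsub)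
  calc |multNet σ t R x z - x * z|
      ≤ R ^ 2 / (4 * |deriv (deriv σ) t|) * (20 * (B * S ^ 3 / (6 * R ^ 3))) := by
        rw [hcomb, abs_mul, abs_div, abs_mul, abs_pow, abs_of_pos hR,
          abs_of_pos (four_pos : (0 : ℝ) < 4)]
        gcongr
        have h8 : B * (2 * S) ^ 3 / (6 * R ^ 3) = 8 * (B * S ^ 3 / (6 * R ^ 3)) := by ring
        exact abs_le.mpr ⟨by linarith, by linarith⟩
    _ = 5 * B * S ^ 3 / (6 * |deriv (deriv σ) t| * R) := by
        field_simp
        ring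

end Networks

theorem abs_mul_apply_mul_sub_max_le {σ : ℝ → ℝ} (hpos : ∀ y, 0 < y → |σ y - 1| ≤ 1 / y)
    (hneg : ∀ y, y < 0 → |σ y| ≤ 1 / |y|) {R : ℝ} (hR : 0 < R) (u : ℝ) :
    |u * σ (R * u) - max u 0| ≤ 1 / R := by
  rcases lt_trichotomy u 0 with hu | rfl | hu
  · calc |u * σ (R * u) - max u 0| = |u| * |σ (R * u)| := by
          rw [max_eq_right hu.le, sub_zero, abs_mul]
      _ ≤ |u| * (1 / |R * u|) := by gcongr; exact hneg _ (mul_neg_of_pos_of_neg hR hu)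
      _ = 1 / R := by
          have : |u| ≠ 0 := abs_ne_zero.mpr hu.ne
          rw [abs_mul, abs_of_pos hR]
          field_simp
  · simp [hR.le]
  · calc |u * σ (R * u) - max u 0| = |u| * |σ (R * u) - 1| := by
          rw [max_eq_left hu.le, ← abs_mul, mul_sub, mul_one]
      _ ≤ |u| * (1 / (R * u)) := by gcongr; exact hpos _ (mul_pos hR hu)
      _ = 1 / R := by
          rw [abs_of_pos hu]
          field_simp

theorem max_one_sub_abs_eq (v : ℝ) :
    max (1 - |v|) 0 = max (v + 1) 0 - 2 * max v 0 + max (v - 1) 0 := by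
  simp only [abs_eq_max_neg, max_def]
  split_ifs <;> linarith

noncomputable def admissibleConst (σ : ℝ → ℝ) (tσ tid : ℝ) : ℝ :=
  max (max (supNorm (deriv (deriv σ))) (supNorm (deriv (deriv (deriv σ))))) 1
    / min (min (2 * |deriv σ tid|) |deriv (deriv σ) tσ|) 1

theorem le_admissibleConst {σ : ℝ → ℝ} {tσ tid : ℝ} (htid : deriv σ tid ≠ 0)
    (htσ : deriv (deriv σ) tσ ≠ 0) :
    1 ≤ admissibleConst σ tσ tid ∧
      supNorm (deriv (deriv σ)) / (2 * |deriv σ tid|) ≤ admissibleConst σ tσ tid ∧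
      supNorm (deriv (deriv (deriv σ))) / |deriv (deriv σ) tσ| ≤ admissibleConst σ tσ tid := by
  have hden : 0 < min (min (2 * |deriv σ tid|) |deriv (deriv σ) tσ|) 1 := by
    have := abs_pos.mpr htid
    have := abs_pos.mpr htσ
    exact lt_min (lt_min (by positivity) (by positivity)) one_pos
  have hnum : 0 ≤ max (max (supNorm (deriv (deriv σ))) (supNorm (deriv (deriv (deriv σ))))) 1 :=
    zero_le_one.trans (le_max_right _ _)
  refine ⟨(one_le_div hden).mpr ((min_le_right _ _).trans (le_max_right _ _)), ?_, ?_⟩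
  · exact div_le_div₀ hnum ((le_max_left _ _).trans (le_max_left _ _)) hden
      ((min_le_left _ _).trans (min_le_left _ _))
  · exact div_le_div₀ hnum ((le_max_right _ _).trans (le_max_left _ _)) hden
      ((min_le_left _ _).trans (min_le_right _ _))

namespace TwoAdmissible

variable {σ : ℝ → ℝ} {tσ tid : ℝ}

theorem deriv_deriv_ne_zero (hσ : TwoAdmissible σ tσ) : deriv (deriv σ) tσ ≠ 0 :=
  hσ.2.2.2.2.2.2.1

theorem pos_of_supNorm_mul_div_le (hσ : TwoAdmissible σ tσ) (htid : deriv σ tid ≠ 0) {K R : ℝ}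
    (hK : 0 < K) (hR : supNorm (deriv (deriv σ)) * K / (2 * |deriv σ tid|) ≤ R) : 0 < R := by
  have hN₂ : 0 < supNorm (deriv (deriv σ)) := (abs_pos.mpr hσ.deriv_deriv_ne_zero).trans_le
    (hσ.abs_iterate_deriv_le_supNorm (k := 2) (by norm_num) tσ)
  have := abs_pos.mpr htid
  exact lt_of_lt_of_le (by positivity) hR

theorem abs_reluNet_sub_max_le (hσ : TwoAdmissible σ tσ) (htid : deriv σ tid ≠ 0) {K R u : ℝ}
    (hK : 1 ≤ K) (hR : supNorm (deriv (deriv σ)) * K / (2 * |deriv σ tid|) ≤ R) (hu : |u| ≤ K) :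
    |reluNet σ tσ tid R u - max u 0| ≤ 49 / 2 * admissibleConst σ tσ tid * K ^ 3 / R := by
  have ⟨hrange, _, _, _, _, _, htσ, hpos, hneg⟩ := hσ
  obtain ⟨hC, hC₂, hC₃⟩ := le_admissibleConst htid htσ
  set C := admissibleConst σ tσ tid
  set N₂ := supNorm (deriv (deriv σ))
  have hR0 : 0 < R := hσ.pos_of_supNorm_mul_div_le htid (by linarith) hR
  have hd₀ : ∀ x, HasDerivAt σ (deriv σ x) x := hσ.hasDerivAt_iterate_deriv (k := 0) (by norm_num)
  have hd₁ : ∀ x, HasDerivAt (deriv σ) (deriv (deriv σ) x) x :=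
    hσ.hasDerivAt_iterate_deriv (k := 1) (by norm_num)
  have hd₂ : ∀ x, HasDerivAt (deriv (deriv σ)) (deriv (deriv (deriv σ)) x) x :=
    hσ.hasDerivAt_iterate_deriv (k := 2) (by norm_num)
  have hB₂ : ∀ x, |deriv (deriv σ) x| ≤ N₂ :=
    hσ.abs_iterate_deriv_le_supNorm (k := 2) (by norm_num)
  have hN₂ : 0 ≤ N₂ := (abs_nonneg _).trans (hB₂ 0)
  have hB₃ : ∀ x, |deriv (deriv (deriv σ)) x| ≤ supNorm (deriv (deriv (deriv σ))) :=
    hσ.abs_iterate_deriv_le_supNorm (k := 3) le_rfl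
  set a := idNet σ tid R u
  have hid : |a - u| ≤ N₂ * K ^ 2 / (2 * |deriv σ tid| * R) := by
    refine (abs_idNet_sub_le hd₀ hd₁ hB₂ htid hR0 u).trans ?_
    have : u ^ 2 ≤ K ^ 2 := sq_le_sq' (abs_le.mp hu).1 (abs_le.mp hu).2
    gcongr
  have hidK : |a - u| ≤ K := by
    refine hid.trans ?_
    calc N₂ * K ^ 2 / (2 * |deriv σ tid| * R) = N₂ * K / (2 * |deriv σ tid|) * K / R := by ring
      _ ≤ R * K / R := by gcongr
      _ = K := by field_simp
  have hidC : |a - u| ≤ C * K ^ 2 / R :=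
    calc |a - u| ≤ N₂ * K ^ 2 / (2 * |deriv σ tid| * R) := hid
      _ = N₂ / (2 * |deriv σ tid|) * K ^ 2 / R := by ring
      _ ≤ C * K ^ 2 / R := by gcongr
  have hs : |σ (R * u)| ≤ 1 := abs_le.mpr ⟨by linarith [(hrange (R * u)).1], (hrange (R * u)).2⟩
  have hmult : |reluNet σ tσ tid R u - a * σ (R * u)| ≤ 45 / 2 * C * K ^ 3 / R := by
    have ha : |a| + |σ (R * u)| ≤ 3 * K := by
      linarith [abs_sub_abs_le_abs_sub a u]
    refine (abs_multNet_sub_mul_le hd₀ hd₁ hd₂ hB₃ htσ hR0 _ _).trans ?_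
    calc 5 * supNorm (deriv (deriv (deriv σ))) * (|a| + |σ (R * u)|) ^ 3
          / (6 * |deriv (deriv σ) tσ| * R)
        ≤ 5 * supNorm (deriv (deriv (deriv σ))) * (3 * K) ^ 3
            / (6 * |deriv (deriv σ) tσ| * R) := by
          have : 0 ≤ supNorm (deriv (deriv (deriv σ))) := (abs_nonneg _).trans (hB₃ 0)
          have := abs_pos.mpr htσ
          gcongr
      _ = 45 / 2 * (supNorm (deriv (deriv (deriv σ))) / |deriv (deriv σ) tσ|) * K ^ 3 / R := by
          field_simp
          ring
      _ ≤ 45 / 2 * C * K ^ 3 / R := by gcongr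
  have hmid : |a * σ (R * u) - u * σ (R * u)| ≤ C * K ^ 2 / R := by
    rw [← sub_mul, abs_mul]
    exact (mul_le_mul hidC hs (abs_nonneg _) (by positivity)).trans_eq (mul_one _)
  have hact := abs_mul_apply_mul_sub_max_le hpos hneg hR0 u
  have hK₂ : C * K ^ 2 / R ≤ C * K ^ 3 / R := by
    gcongr
    norm_num
  have hK₃ : 1 / R ≤ C * K ^ 3 / R := by
    gcongr
    nlinarith [one_le_pow₀ (n := 3) hK]
  calc |reluNet σ tσ tid R u - max u 0|
      ≤ |reluNet σ tσ tid R u - a * σ (R * u)| + |a * σ (R * u) - u * σ (R * u)|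
        + |u * σ (R * u) - max u 0| :=
        (abs_sub_le _ (a * σ (R * u)) _).trans
          (by linarith [abs_sub_le (a * σ (R * u)) (u * σ (R * u)) (max u 0)])
    _ ≤ 45 / 2 * C * K ^ 3 / R + C * K ^ 3 / R + C * K ^ 3 / R := by linarith
    _ = 49 / 2 * C * K ^ 3 / R := by ring

end TwoAdmissible

/-- approximation of the hat function
`x ↦ (1 − (M/(2a))·|x−y|)₊` by the network `f_{hat,y}`. -/
theorem hat_network_approx (M : ℕ) (hM : 0 < M)
    (σ : ℝ → ℝ) (tσ tid : ℝ) (hσ : TwoAdmissible σ tσ) (htid : deriv σ tid ≠ 0)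
    (a : ℝ) (ha : 0 < a) (R : ℝ)
    (hR : supNorm (deriv (deriv σ)) * ((M : ℝ) + 1) / (2 * |deriv σ tid|) ≤ R)
    (y : ℝ) (hy : y ∈ Set.Icc (-a) a)
    (f_id : ℝ → ℝ)
    (hfid : ∀ x : ℝ, f_id x = (R / deriv σ tid) * (σ (x / R + tid) - σ tid))
    (f_mult : ℝ → ℝ → ℝ)
    (hfm : ∀ x z : ℝ, f_mult x z = (R ^ 2 / (4 * deriv (deriv σ) tσ)) *
      (σ (2 * (x + z) / R + tσ) - 2 * σ ((x + z) / R + tσ)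
        - σ (2 * (x - z) / R + tσ) + 2 * σ ((x - z) / R + tσ)))
    (f_ReLU : ℝ → ℝ)
    (hrelu : ∀ x : ℝ, f_ReLU x = f_mult (f_id x) (σ (R * x)))
    (f_hat : ℝ → ℝ)
    (hfhat : ∀ x : ℝ, f_hat x =
      f_ReLU ((M / (2 * a)) * (x - y) + 1) - 2 * f_ReLU ((M / (2 * a)) * (x - y))
        + f_ReLU ((M / (2 * a)) * (x - y) - 1)) :
    ∀ x ∈ Set.Icc (-a) a,
      |f_hat x - max (1 - (M / (2 * a)) * |x - y|) 0| ≤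
        1792 * (max (max (supNorm (deriv (deriv σ))) (supNorm (deriv (deriv (deriv σ))))) 1
          / min (min (2 * |deriv σ tid|) (|deriv (deriv σ) tσ|)) 1) * (M : ℝ) ^ 3 * (1 / R) := by
  intro x ⟨hxl, hxu⟩
  have hReLU : f_ReLU = reluNet σ tσ tid R := funext fun w => by
    rw [hrelu, hfm, hfid, reluNet, multNet, idNet]
  subst hReLU
  rw [hfhat]
  set C := admissibleConst σ tσ tid
  set v := (M : ℝ) / (2 * a) * (x - y)
  have hvabs : |v| = M / (2 * a) * |x - y| := by rw [abs_mul, abs_of_nonneg (by positivity)]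
  have hv : |v| ≤ M := by
    have : |x - y| ≤ 2 * a := abs_le.mpr ⟨by linarith [hy.2], by linarith [hy.1]⟩
    calc |v| = M / (2 * a) * |x - y| := hvabs
      _ ≤ M / (2 * a) * (2 * a) := by gcongr
      _ = M := by field_simp
  have hM1 : (1 : ℝ) ≤ M + 1 := by linarith [Nat.cast_nonneg (α := ℝ) M]
  have herr := fun w (hw : |w| ≤ (M : ℝ) + 1) => hσ.abs_reluNet_sub_max_le htid hM1 hR hw
  obtain ⟨h₁, h₁'⟩ := abs_le.mp (herr (v + 1) ((abs_add_le v 1).trans (by simpa using hv)))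
  obtain ⟨h₂, h₂'⟩ := abs_le.mp (herr v (by linarith))
  obtain ⟨h₃, h₃'⟩ := abs_le.mp (herr (v - 1) ((abs_sub v 1).trans (by simpa using hv)))
  have hC : 0 ≤ C := zero_le_one.trans (le_admissibleConst htid hσ.deriv_deriv_ne_zero).1
  have hR0 : 0 < R := hσ.pos_of_supNorm_mul_div_le htid (by linarith) hR
  have hM8 : ((M : ℝ) + 1) ^ 3 ≤ 8 * M ^ 3 := by
    have : (1 : ℝ) ≤ M := by exact_mod_cast hM
    calc ((M : ℝ) + 1) ^ 3 ≤ (2 * (M : ℝ)) ^ 3 := by gcongr; linarith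
      _ = 8 * (M : ℝ) ^ 3 := by ring
  rw [← hvabs, max_one_sub_abs_eq]
  calc _ ≤ 4 * (49 / 2 * C * ((M : ℝ) + 1) ^ 3 / R) := abs_le.mpr ⟨by linarith, by linarith⟩
    _ ≤ 4 * (49 / 2 * C * (8 * M ^ 3) / R) := by gcongr
    _ = 784 * (C * M ^ 3 / R) := by ring
    _ ≤ 1792 * (C * M ^ 3 / R) := by gcongr; norm_num
    _ = 1792 * C * M ^ 3 * (1 / R) := by ring
end

section
/- Let p = q + s for some q ∈ ℕ₀ and s ∈ (0,1], let C > 0, r ∈ ℕ, let g_l : ℝ → ℝ be (p,C)-smooth functions and let a_l, b_l ∈ ℝ^d (l = 1, …, r). Set m(x) = Σ_{l=1}^r g_l(a_lᵀx) and g(x) = Σ_{l=1}^r Σ_{j=0}^q (g_l^{(j)}(b_lᵀx)/j!) · ((a_l − b_l)ᵀx)^j, where g_l^{(j)} denotes the j-th derivative of g_l. Then for every x ∈ ℝ^d: |m(x) − g(x)| ≤ (r · d^p · C / q!) · ‖x‖_∞^p · max_{l=1,…,r} ‖a_l − b_l‖_∞^p. -/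
open Real Set

/-- A function `g : ℝ → ℝ` is `(p,C)`-smooth with `p = q + s`, `q ∈ ℕ₀`, `0 < s ≤ 1`:
`g` is `q` times continuously differentiable and its `q`-th derivative is `s`-Hölder
continuous with constant `C`. -/
def PCSmooth (q : ℕ) (s C : ℝ) (g : ℝ → ℝ) : Prop :=
  ContDiff ℝ q g ∧ ∀ x z : ℝ, |iteratedDeriv q g x - iteratedDeriv q g z| ≤ C * |x - z| ^ s

/-!
Each summand is a one-variable Taylor remainder. By Taylor's theorem with the Lagrange remainder
of order `q`, the error of the degree-`q` Taylor polynomial of `g_l` at `v = b_lᵀx`, evaluated at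
`u = a_lᵀx`, is `(g_l^{(q)}(ξ) - g_l^{(q)}(v)) (u - v)^q / q!` for some `ξ` between `u` and `v`,
and the Hölder condition bounds it by `C |u - v|^{q+s} / q!`. Finally
`|u - v| = |(a_l - b_l)ᵀx| ≤ d ‖a_l - b_l‖_∞ ‖x‖_∞`.
-/

open Finset Nat

section Taylor

variable {f : ℝ → ℝ}

lemma taylorWithinEval_uIcc_eq_sum {n : ℕ} (hf : ContDiff ℝ n f) {x₀ x : ℝ} (hx : x₀ ≠ x) :
    taylorWithinEval f n (uIcc x₀ x) x₀ x =
      ∑ k ∈ range (n + 1), iteratedDeriv k f x₀ / k ! * (x - x₀) ^ k := by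
  rw [taylor_within_apply]
  refine sum_congr rfl fun k hk => ?_
  have hkn : (k : WithTop ℕ∞) ≤ n := by exact_mod_cast Nat.lt_succ_iff.mp (mem_range.mp hk)
  rw [iteratedDerivWithin_eq_iteratedDeriv (uniqueDiffOn_uIcc hx)
    ((hf.of_le hkn).contDiffAt) left_mem_uIcc, smul_eq_mul]
  ring

lemma exists_sub_taylor_eq_iteratedDeriv_mul {n : ℕ} (hf : ContDiff ℝ n f) (x₀ x : ℝ) :
    ∃ ξ ∈ uIcc x₀ x, f x - ∑ k ∈ range n, iteratedDeriv k f x₀ / k ! * (x - x₀) ^ k =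
      iteratedDeriv n f ξ * (x - x₀) ^ n / n ! := by
  rcases n with _ | m
  · exact ⟨x, right_mem_uIcc, by simp⟩
  rcases eq_or_ne x₀ x with rfl | hx
  · exact ⟨x₀, left_mem_uIcc, by simp [sum_range_succ']⟩
  obtain ⟨ξ, hξ, h⟩ :=
    taylor_mean_remainder_lagrange_iteratedDeriv hx (by exact_mod_cast hf.contDiffOn)
  refine ⟨ξ, uIoo_subset_uIcc_self hξ, ?_⟩
  rwa [taylorWithinEval_uIcc_eq_sum (by exact_mod_cast hf.of_succ) hx] at h

lemma abs_sub_taylor_le_of_pcSmooth {q : ℕ} {s C : ℝ} (hs : 0 < s) (hC : 0 ≤ C)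
    (hf : PCSmooth q s C f) (u v : ℝ) :
    |f u - ∑ k ∈ range (q + 1), iteratedDeriv k f v / k ! * (u - v) ^ k| ≤
      C / q ! * |u - v| ^ ((q : ℝ) + s) := by
  obtain ⟨ξ, hξ, hrem⟩ := exists_sub_taylor_eq_iteratedDeriv_mul hf.1 v u
  have hdiff : f u - ∑ k ∈ range (q + 1), iteratedDeriv k f v / k ! * (u - v) ^ k =
      (iteratedDeriv q f ξ - iteratedDeriv q f v) * (u - v) ^ q / q ! := by
    rw [sum_range_succ, ← sub_sub, hrem]
    ring
  have hholder : |iteratedDeriv q f ξ - iteratedDeriv q f v| ≤ C * |u - v| ^ s :=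
    (hf.2 ξ v).trans <|
      mul_le_mul_of_nonneg_left (rpow_le_rpow (abs_nonneg _) (abs_sub_left_of_mem_uIcc hξ) hs.le) hC
  rw [hdiff, abs_div, abs_mul, abs_pow, abs_of_pos (by positivity : (0 : ℝ) < q !),
    add_comm (q : ℝ), rpow_add_natCast' (abs_nonneg _) (by positivity)]
  calc _ ≤ C * |u - v| ^ s * |u - v| ^ q / q ! := by gcongr
    _ = _ := by ring

end Taylor

lemma abs_sum_mul_le_card_mul_norm_mul_norm {ι : Type*} [Fintype ι] (y x : ι → ℝ) :
    |∑ i, y i * x i| ≤ Fintype.card ι * ‖y‖ * ‖x‖ := by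
  calc |∑ i, y i * x i| ≤ ∑ i, |y i| * |x i| := by
        simpa only [abs_mul] using abs_sum_le_sum_abs (fun i => y i * x i) univ
    _ ≤ ∑ _i : ι, ‖y‖ * ‖x‖ := by
        gcongr with i
        · exact norm_le_pi_norm y i
        · exact norm_le_pi_norm x i
    _ = Fintype.card ι * ‖y‖ * ‖x‖ := by
        rw [sum_const, Finset.card_univ, nsmul_eq_mul, mul_assoc]

lemma abs_sub_taylor_ridge_le_of_pcSmooth {ι : Type*} [Fintype ι] {q : ℕ} {s C : ℝ} {f : ℝ → ℝ}
    (hs : 0 < s) (hC : 0 ≤ C) (hf : PCSmooth q s C f) (α β x : ι → ℝ) :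
    |f (∑ i, α i * x i) - ∑ k ∈ range (q + 1),
        iteratedDeriv k f (∑ i, β i * x i) / k ! * (∑ i, (α i - β i) * x i) ^ k| ≤
      C / q ! * (Fintype.card ι * ‖α - β‖ * ‖x‖) ^ ((q : ℝ) + s) := by
  have hsub : ∑ i, α i * x i - ∑ i, β i * x i = ∑ i, (α i - β i) * x i := by
    simp only [← sum_sub_distrib, sub_mul]
  have htaylor := abs_sub_taylor_le_of_pcSmooth hs hC hf (∑ i, α i * x i) (∑ i, β i * x i)
  rw [hsub] at htaylor
  exact htaylor.trans (by gcongr; simpa using abs_sum_mul_le_card_mul_norm_mul_norm (α - β) x)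

theorem projection_pursuit_taylor_approx_general (d r q : ℕ)
    (s C p : ℝ) (hs : 0 < s) (hp : p = q + s) (hC : 0 < C)
    (g : Fin r → ℝ → ℝ) (hg : ∀ l, PCSmooth q s C (g l))
    (a b : Fin r → Fin d → ℝ)
    (m G : (Fin d → ℝ) → ℝ)
    (hm : ∀ x, m x = ∑ l, g l (∑ i, a l i * x i))
    (hG : ∀ x, G x = ∑ l, ∑ k ∈ Finset.range (q + 1),
      (iteratedDeriv k (g l) (∑ i, b l i * x i) / (Nat.factorial k : ℝ)) *
        (∑ i, (a l i - b l i) * x i) ^ k) :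
    ∀ x : Fin d → ℝ,
      |m x - G x| ≤ ((r : ℝ) * (d : ℝ) ^ p * C / (Nat.factorial q : ℝ)) * ‖x‖ ^ p *
        (⨆ l : Fin r, ‖a l - b l‖) ^ p := by
  intro x
  subst hp
  set M := ⨆ l : Fin r, ‖a l - b l‖
  have hM : ∀ l, ‖a l - b l‖ ≤ M := le_ciSup (finite_range _).bddAbove
  have hM0 : 0 ≤ M := iSup_nonneg fun l => norm_nonneg _
  have hterm (l : Fin r) :=
    (abs_sub_taylor_ridge_le_of_pcSmooth hs hC.le (hg l) (a l) (b l) x).trans <|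
      show _ ≤ C / q ! * (d * M * ‖x‖) ^ ((q : ℝ) + s) by
        simp only [Fintype.card_fin]
        gcongr
        exact hM l
  rw [hm, hG, ← sum_sub_distrib]
  refine (abs_sum_le_sum_abs _ _).trans ((sum_le_sum fun l _ => hterm l).trans_eq ?_)
  rw [sum_const, Finset.card_univ, Fintype.card_fin, nsmul_eq_mul,
    mul_rpow (by positivity) (norm_nonneg x), mul_rpow (by positivity) hM0]
  ring

/-- approximation of a projection pursuit regression function by sums of
Taylor expansions around perturbed directions (Lemma 6). -/
theorem projection_pursuit_taylor_approx (d r q : ℕ) (hd : 0 < d) (hr : 0 < r)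
    (s C p : ℝ) (hs : 0 < s) (hs1 : s ≤ 1) (hp : p = q + s) (hC : 0 < C)
    (g : Fin r → ℝ → ℝ) (hg : ∀ l, PCSmooth q s C (g l))
    (a b : Fin r → Fin d → ℝ)
    (m G : (Fin d → ℝ) → ℝ)
    (hm : ∀ x, m x = ∑ l, g l (∑ i, a l i * x i))
    (hG : ∀ x, G x = ∑ l, ∑ k ∈ Finset.range (q + 1),
      (iteratedDeriv k (g l) (∑ i, b l i * x i) / (Nat.factorial k : ℝ)) *
        (∑ i, (a l i - b l i) * x i) ^ k) :
    ∀ x : Fin d → ℝ,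
      |m x - G x| ≤ ((r : ℝ) * (d : ℝ) ^ p * C / (Nat.factorial q : ℝ)) * ‖x‖ ^ p *
        (⨆ l : Fin r, ‖a l - b l‖) ^ p :=
  projection_pursuit_taylor_approx_general d r q s C p hs hp hC g hg a b m G hm hG
end

section
/- Let d, r ∈ ℕ, p > 0, let n ≥ 2 be an integer, let a₁, …, a_r ∈ [−1,1]^d, let I_n ∈ ℕ, and let b_l^{(i)} (l = 1,…,r; i = 1,…,I_n) be independent random vectors, each uniformly distributed on [−1,1]^d. Then E[ min_{i=1,…,I_n} max_{l=1,…,r} ‖b_l^{(i)} − a_l‖_∞^{2p} ] ≤ (log n / n)^{2p/(2p+1)} + 2^{2p}·(1 − 2^{−r·d}·(log n / n)^{r·d/(2p+1)})^{I_n}. Moreover, for every sufficiently large constant c₉ > 0 there is a constant c > 0 such that, if I_n ≥ c₉·(log n)²·(n/log n)^{r·d/(2p+1)}, then for n sufficiently large E[ min_{i=1,…,I_n} max_{l=1,…,r} ‖b_l^{(i)} − a_l‖_∞^{2p} ] ≤ c·(log n / n)^{2p/(2p+1)}. -/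
/-!
Call the `i`-th draw good if `‖b_l^{(i)} - a_l‖_∞ ≤ ε` for every `l`. If some draw is good, the
min-max is at most `ε^{2p}`; otherwise it is at most `2^{2p}`, as all points lie in `[-1,1]^d`.
For `ε ≤ 2` the sup-norm ball of radius `ε` around a point of the cube contains a box of side `ε`
inside the cube, so a draw is good with probability at least `q = (ε/2)^{rd}` and, by
independence, no draw is good with probability at most `(1 - q)^{I_n}`. The choice
`ε = (log n / n)^{1/(2p+1)}` gives the first bound. For the second, the lower bound on `I_n` gives
`q I_n ≥ (log n)^2 ≥ log n`, hence `(1 - q)^{I_n} ≤ exp (-q I_n) ≤ 1/n ≤ (log n / n)^{2p/(2p+1)}`.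
-/

open MeasureTheory ProbabilityTheory Real Set

/-- The uniform distribution on the cube `[−1,1]^d`. -/
noncomputable def uniformCube (d : ℕ) : Measure (Fin d → ℝ) :=
  (volume (Set.univ.pi fun _ : Fin d => Set.Icc (-1 : ℝ) 1))⁻¹ •
    volume.restrict (Set.univ.pi fun _ : Fin d => Set.Icc (-1 : ℝ) 1)

namespace ProbabilityTheory

variable {Ω ι κ β : Type*} {mΩ : MeasurableSpace Ω} {μ : Measure Ω} [MeasurableSpace β]
  [Fintype ι] [Fintype κ] {f : ι × κ → Ω → β}

lemma iIndepFun.map_curry_eq_pi (hf : ∀ j, Measurable (f j)) (h : iIndepFun f μ) :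
    μ.map (fun ω i l ↦ f (i, l) ω) = Measure.pi fun i ↦ Measure.pi fun l ↦ μ.map (f (i, l)) := by
  have := h.isProbabilityMeasure
  have _ j := Measure.isProbabilityMeasure_map (μ := μ) (hf j).aemeasurable
  have hcurry : (fun ω i l ↦ f (i, l) ω) = MeasurableEquiv.curry ι κ β ∘ fun ω j ↦ f j ω := rfl
  rw [hcurry, ← Measure.map_map (by fun_prop) (by fun_prop), h.map_fun_eq_infinitePi_map hf,
    Measure.infinitePi_map_curry (fun i l ↦ μ.map (f (i, l)))]
  simp only [Measure.infinitePi_eq_pi]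

lemma iIndepFun.measure_iInter_compl_iInter_preimage (hf : ∀ j, Measurable (f j))
    (h : iIndepFun f μ) {C : κ → Set β} (hC : ∀ l, MeasurableSet (C l)) :
    μ (⋂ i, (⋂ l, f (i, l) ⁻¹' C l)ᶜ) = ∏ i, (1 - ∏ l, μ.map (f (i, l)) (C l)) := by
  have := h.isProbabilityMeasure
  have _ j := Measure.isProbabilityMeasure_map (μ := μ) (hf j).aemeasurable
  have hbox : MeasurableSet (univ.pi C) := .univ_pi hC
  have hpre : ⋂ i, (⋂ l, f (i, l) ⁻¹' C l)ᶜ =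
      (fun ω i l ↦ f (i, l) ω) ⁻¹' univ.pi fun _ ↦ (univ.pi C)ᶜ := by
    ext ω; simp
  rw [hpre, ← Measure.map_apply (by fun_prop) (.univ_pi fun _ ↦ hbox.compl),
    h.map_curry_eq_pi hf, Measure.pi_pi]
  congr 1 with i
  rw [prob_compl_eq_one_sub hbox, Measure.pi_pi]

end ProbabilityTheory

lemma Real.iInf_le_of_forall_le {ι : Type*} [Finite ι] {f : ι → ℝ} {a : ℝ} (hf : ∀ i, f i ≤ a)
    (ha : 0 ≤ a) : ⨅ i, f i ≤ a := by
  cases isEmpty_or_nonempty ι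
  · rwa [Real.iInf_of_isEmpty]
  · exact ciInf_le_of_le (Set.finite_range f).bddBelow (Classical.arbitrary ι) (hf _)

lemma integral_le_add_mul_measureReal_of_ae_le {Ω : Type*} {mΩ : MeasurableSpace Ω}
    {μ : Measure Ω} [IsProbabilityMeasure μ] {f : Ω → ℝ}
    (hf : 0 ≤ᵐ[μ] f) {E : Set Ω} (hE : MeasurableSet E) {A B : ℝ}
    (h : ∀ᵐ ω ∂μ, f ω ≤ A + E.indicator (fun _ ↦ B) ω) :
    ∫ ω, f ω ∂μ ≤ A + B * μ.real E := by
  have hint : Integrable (fun ω ↦ A + E.indicator (fun _ ↦ B) ω) μ :=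
    (integrable_const _).add ((integrable_const _).indicator hE)
  refine (integral_mono_of_nonneg hf hint h).trans_eq ?_
  rw [integral_add (integrable_const _) ((integrable_const _).indicator hE), integral_const,
    integral_indicator_const _ hE]
  simp [mul_comm]

lemma log_natCast_div_mem_Ioo {n : ℕ} (hn : 2 ≤ n) : Real.log n / n ∈ Ioo 0 1 := by
  have hn0 : (0 : ℝ) < n := by positivity
  refine ⟨div_pos (Real.log_pos (by exact_mod_cast hn)) hn0, (div_lt_one hn0).2 ?_⟩
  linarith [Real.log_le_sub_one_of_pos hn0]

lemma one_sub_pow_le_exp_neg_mul {q : ℝ} (hq : q ≤ 1) (N : ℕ) : (1 - q) ^ N ≤ exp (-(q * N)) :=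
  calc (1 - q) ^ N ≤ exp (-q) ^ N := pow_le_pow_left₀ (by linarith) (one_sub_le_exp_neg q) N
    _ = exp (-(q * N)) := by rw [← exp_nat_mul]; ring_nf

lemma one_le_log_natCast {n : ℕ} (hn : 3 ≤ n) : 1 ≤ Real.log n := by
  rw [Real.le_log_iff_exp_le (by positivity)]
  have : (3 : ℝ) ≤ n := by exact_mod_cast hn
  linarith [Real.exp_one_lt_d9]

lemma inv_natCast_le_rpow_log_div {n : ℕ} (hn : 3 ≤ n) {α : ℝ} (hα0 : 0 ≤ α) (hα1 : α ≤ 1) :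
    (n : ℝ)⁻¹ ≤ (Real.log n / n) ^ α := by
  have hn1 : (1 : ℝ) ≤ n := by exact_mod_cast (by omega : 1 ≤ n)
  calc (n : ℝ)⁻¹ = (n : ℝ)⁻¹ ^ (1 : ℝ) := (rpow_one _).symm
    _ ≤ (n : ℝ)⁻¹ ^ α := rpow_le_rpow_of_exponent_ge (by positivity) (inv_le_one_of_one_le₀ hn1) hα1
    _ ≤ (Real.log n / n) ^ α := by
      gcongr
      rw [inv_eq_one_div]
      gcongr
      exact one_le_log_natCast hn

lemma one_sub_pow_le_rpow_log_div {k N n : ℕ} {t α c₉ : ℝ} (hn : 3 ≤ n) (ht : 0 ≤ t)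
    (hα0 : 0 ≤ α) (hα1 : α ≤ 1) (hc₉ : 2 ^ k ≤ c₉)
    (hN : c₉ * Real.log n ^ 2 * (n / Real.log n) ^ t ≤ N) :
    (1 - ((2 : ℝ) ^ k)⁻¹ * (Real.log n / n) ^ t) ^ N ≤ (Real.log n / n) ^ α := by
  have hlog := one_le_log_natCast hn
  obtain ⟨hx0, hx1⟩ := log_natCast_div_mem_Ioo (by omega : 2 ≤ n)
  set x := Real.log n / n
  set q := ((2 : ℝ) ^ k)⁻¹ * x ^ t
  have hq1 : q ≤ 1 := mul_le_one₀ (inv_le_one_of_one_le₀ (one_le_pow₀ one_le_two))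
    (rpow_nonneg hx0.le t) (rpow_le_one hx0.le hx1.le ht)
  have hxt : x ^ t * (n / Real.log n) ^ t = 1 := by
    rw [← mul_rpow hx0.le (by positivity), div_mul_div_cancel₀' (by positivity), div_self
      (by positivity), one_rpow]
  have hqN : Real.log n ≤ q * N :=
    calc Real.log n ≤ Real.log n ^ 2 := by nlinarith
      _ ≤ c₉ / 2 ^ k * Real.log n ^ 2 :=
        le_mul_of_one_le_left (sq_nonneg _) ((one_le_div (by positivity)).2 hc₉)
      _ = q * (c₉ * Real.log n ^ 2 * (n / Real.log n) ^ t) := by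
        linear_combination (-((2 : ℝ) ^ k)⁻¹ * c₉ * Real.log n ^ 2) * hxt
      _ ≤ q * N := by gcongr
  calc (1 - q) ^ N ≤ exp (-(q * N)) := one_sub_pow_le_exp_neg_mul hq1 N
    _ ≤ exp (-Real.log n) := by gcongr
    _ = (n : ℝ)⁻¹ := by rw [exp_neg, exp_log (by positivity)]
    _ ≤ x ^ α := inv_natCast_le_rpow_log_div hn hα0 hα1

def cube (d : ℕ) : Set (Fin d → ℝ) := univ.pi fun _ ↦ Icc (-1) 1

section uniformCube

variable {d : ℕ}

lemma measurableSet_cube : MeasurableSet (cube d) := .univ_pi fun _ ↦ measurableSet_Icc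

lemma volume_cube : volume (cube d) = 2 ^ d := by
  rw [cube, volume_pi_pi]
  norm_num [Real.volume_Icc]

lemma uniformCube_apply {s : Set (Fin d → ℝ)} (hs : MeasurableSet s) :
    uniformCube d s = (2 ^ d)⁻¹ * volume (s ∩ cube d) := by
  rw [uniformCube, Measure.smul_apply, Measure.restrict_apply hs, ← cube, volume_cube, smul_eq_mul]

lemma ae_mem_cube_uniformCube : ∀ᵐ x ∂uniformCube d, x ∈ cube d :=
  Measure.ae_smul_measure (ae_restrict_mem measurableSet_cube) _

lemma norm_sub_le_two_of_mem_cube {x y : Fin d → ℝ} (hx : x ∈ cube d) (hy : y ∈ cube d) :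
    ‖x - y‖ ≤ 2 := by
  refine (pi_norm_le_iff_of_nonneg zero_le_two).2 fun j ↦ ?_
  have hxj := hx j (mem_univ j)
  have hyj := hy j (mem_univ j)
  rw [Pi.sub_apply, Real.norm_eq_abs, abs_le]
  constructor <;> linarith [hxj.1, hxj.2, hyj.1, hyj.2]

lemma ofReal_le_volume_Icc_inter_Icc {t ε : ℝ} (ht : t ∈ Icc (-1) 1) (hε : ε ≤ 2) :
    ENNReal.ofReal ε ≤ volume (Icc (t - ε) (t + ε) ∩ Icc (-1) 1) := by
  set c := max (-1) (t - ε)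
  calc ENNReal.ofReal ε = volume (Icc c (c + ε)) := by rw [Real.volume_Icc, add_sub_cancel_left]
    _ ≤ _ := measure_mono fun x ⟨hcx, hxc⟩ ↦ by
      have := ht.1; have := ht.2
      refine ⟨⟨?_, ?_⟩, ?_, ?_⟩ <;> simp only [c, max_def] at hcx hxc <;>
        split_ifs at hcx hxc <;> linarith

lemma ofReal_half_pow_le_uniformCube_closedBall {a : Fin d → ℝ} (ha : a ∈ cube d) {ε : ℝ}
    (hε0 : 0 ≤ ε) (hε : ε ≤ 2) :
    ENNReal.ofReal ((ε / 2) ^ d) ≤ uniformCube d (Metric.closedBall a ε) := by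
  rw [uniformCube_apply Metric.isClosed_closedBall.measurableSet, closedBall_pi _ hε0, cube,
    ← pi_inter_distrib, volume_pi_pi, div_pow, ENNReal.ofReal_div_of_pos (by positivity),
    ENNReal.ofReal_pow hε0, ENNReal.div_eq_inv_mul, ENNReal.ofReal_pow zero_le_two,
    ENNReal.ofReal_ofNat]
  gcongr
  calc ENNReal.ofReal ε ^ d = ∏ _j : Fin d, ENNReal.ofReal ε := by simp
    _ ≤ _ := Finset.prod_le_prod' fun j _ ↦ by
      rw [Real.closedBall_eq_Icc]
      exact ofReal_le_volume_Icc_inter_Icc (ha j (mem_univ j)) hε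

end uniformCube

section randomDirections

variable {Ω ι κ : Type*} {mΩ : MeasurableSpace Ω} {μ : Measure Ω} [Fintype ι] [Fintype κ] {d : ℕ}
  {a : κ → Fin d → ℝ} {b : ι → κ → Ω → Fin d → ℝ} {ε : ℝ}

lemma measureReal_iInter_compl_iInter_closedBall_le (ha : ∀ l, a l ∈ cube d)
    (hε0 : 0 ≤ ε) (hε : ε ≤ 2) (hb : ∀ i l, Measurable (b i l))
    (hindep : iIndepFun (fun il : ι × κ ↦ b il.1 il.2) μ)
    (hmap : ∀ i l, μ.map (b i l) = uniformCube d) :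
    μ.real (⋂ i, (⋂ l, b i l ⁻¹' Metric.closedBall (a l) ε)ᶜ) ≤
      (1 - (ε / 2) ^ (Fintype.card κ * d)) ^ Fintype.card ι := by
  set q := (ε / 2) ^ (Fintype.card κ * d) with hq
  have hq1 : q ≤ 1 := pow_le_one₀ (by positivity) (by linarith)
  have hbound : μ (⋂ i, (⋂ l, b i l ⁻¹' Metric.closedBall (a l) ε)ᶜ) ≤
      (1 - ENNReal.ofReal q) ^ Fintype.card ι := by
    rw [hindep.measure_iInter_compl_iInter_preimage (fun j ↦ hb j.1 j.2)
      (fun _ ↦ Metric.isClosed_closedBall.measurableSet), ← Finset.card_univ, ← Finset.prod_const]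
    gcongr with i
    rw [hq, pow_mul', ENNReal.ofReal_pow (by positivity), ← Finset.card_univ, ← Finset.prod_const]
    gcongr with l
    rw [hmap]
    exact ofReal_half_pow_le_uniformCube_closedBall (ha l) hε0 hε
  refine (ENNReal.toReal_mono (by simp) hbound).trans_eq ?_
  rw [ENNReal.toReal_pow, ENNReal.toReal_sub_of_le (by simpa using hq1) ENNReal.one_ne_top,
    ENNReal.toReal_ofReal (by positivity), ENNReal.toReal_one]

theorem integral_iInf_iSup_norm_sub_rpow_le {s : ℝ} (hs : 0 ≤ s) (ha : ∀ l, a l ∈ cube d)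
    (hε0 : 0 ≤ ε) (hε : ε ≤ 2) (hb : ∀ i l, Measurable (b i l))
    (hindep : iIndepFun (fun il : ι × κ ↦ b il.1 il.2) μ)
    (hmap : ∀ i l, μ.map (b i l) = uniformCube d) :
    ∫ ω, ⨅ i, ⨆ l, ‖b i l ω - a l‖ ^ s ∂μ ≤
      ε ^ s + 2 ^ s * (1 - (ε / 2) ^ (Fintype.card κ * d)) ^ Fintype.card ι := by
  have := hindep.isProbabilityMeasure
  set E := ⋂ i, (⋂ l, b i l ⁻¹' Metric.closedBall (a l) ε)ᶜ
  have hE : MeasurableSet E := .iInter fun i ↦ .compl <| .iInter fun l ↦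
    hb i l Metric.isClosed_closedBall.measurableSet
  have hcube : ∀ᵐ ω ∂μ, ∀ i l, b i l ω ∈ cube d := by
    simp only [ae_all_iff]
    intro i l
    exact ae_of_ae_map (hb i l).aemeasurable (hmap i l ▸ ae_mem_cube_uniformCube)
  have hpointwise : ∀ᵐ ω ∂μ, ⨅ i, ⨆ l, ‖b i l ω - a l‖ ^ s ≤
      ε ^ s + E.indicator (fun _ ↦ 2 ^ s) ω := by
    filter_upwards [hcube] with ω hω
    by_cases hωE : ω ∈ E
    · rw [indicator_of_mem hωE]
      have h2 : ⨅ i, ⨆ l, ‖b i l ω - a l‖ ^ s ≤ 2 ^ s :=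
        Real.iInf_le_of_forall_le (fun i ↦ Real.iSup_le (fun l ↦
          rpow_le_rpow (norm_nonneg _) (norm_sub_le_two_of_mem_cube (hω i l) (ha l)) hs)
          (by positivity)) (by positivity)
      linarith [rpow_nonneg hε0 s]
    · rw [indicator_of_notMem hωE, add_zero]
      obtain ⟨i, hi⟩ : ∃ i, ∀ l, ‖b i l ω - a l‖ ≤ ε := by
        simpa [E, dist_eq_norm] using hωE
      exact ciInf_le_of_le (Set.finite_range _).bddBelow i <|
        Real.iSup_le (fun l ↦ rpow_le_rpow (norm_nonneg _) (hi l) hs) (by positivity)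
  have hnonneg : 0 ≤ᵐ[μ] fun ω ↦ ⨅ i, ⨆ l, ‖b i l ω - a l‖ ^ s :=
    ae_of_all _ fun ω ↦ Real.iInf_nonneg fun i ↦ Real.iSup_nonneg fun l ↦ by positivity
  refine (integral_le_add_mul_measureReal_of_ae_le hnonneg hE hpointwise).trans ?_
  gcongr
  exact measureReal_iInter_compl_iInter_closedBall_le ha hε0 hε hb hindep hmap

theorem integral_iInf_iSup_norm_sub_rpow_le_log_div {s : ℝ} (hs : 0 ≤ s) {n : ℕ} (hn : 2 ≤ n)
    (ha : ∀ l, a l ∈ cube d) (hb : ∀ i l, Measurable (b i l))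
    (hindep : iIndepFun (fun il : ι × κ ↦ b il.1 il.2) μ)
    (hmap : ∀ i l, μ.map (b i l) = uniformCube d) :
    ∫ ω, ⨅ i, ⨆ l, ‖b i l ω - a l‖ ^ s ∂μ ≤
      (Real.log n / n) ^ (s / (s + 1)) + 2 ^ s * (1 - ((2 : ℝ) ^ (Fintype.card κ * d))⁻¹ *
        (Real.log n / n) ^ ((Fintype.card κ * d : ℕ) / (s + 1))) ^ Fintype.card ι := by
  obtain ⟨hx0, hx1⟩ := log_natCast_div_mem_Ioo hn
  set x := Real.log n / n
  have hε1 : x ^ (1 / (s + 1)) ≤ 1 := rpow_le_one hx0.le hx1.le (by positivity)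
  have hεs : (x ^ (1 / (s + 1))) ^ s = x ^ (s / (s + 1)) := by
    rw [← rpow_mul hx0.le, one_div_mul_eq_div]
  have hεm : (x ^ (1 / (s + 1)) / 2) ^ (Fintype.card κ * d) =
      ((2 : ℝ) ^ (Fintype.card κ * d))⁻¹ * x ^ ((Fintype.card κ * d : ℕ) / (s + 1)) := by
    rw [div_pow, ← rpow_natCast (x ^ _), ← rpow_mul hx0.le, one_div_mul_eq_div, div_eq_inv_mul]
  rw [← hεs, ← hεm]
  exact integral_iInf_iSup_norm_sub_rpow_le hs ha (by positivity) (by linarith) hb hindep hmap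

end randomDirections

theorem random_directions_expectation_general (d r : ℕ)
    (p : ℝ) (hp : 0 < p) :
    (∀ (n : ℕ), 2 ≤ n → ∀ (In : ℕ), 0 < In →
      ∀ (a : Fin r → Fin d → ℝ), (∀ l i, a l i ∈ Set.Icc (-1 : ℝ) 1) →
      ∀ (Ω : Type) (mΩ : MeasurableSpace Ω) (μ : Measure Ω), IsProbabilityMeasure μ →
      ∀ (b : Fin In → Fin r → Ω → Fin d → ℝ), (∀ i l, Measurable (b i l)) →
      iIndepFun
        (fun il : Fin In × Fin r => b il.1 il.2) μ →
      (∀ i l, μ.map (b i l) = uniformCube d) →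
      ∫ ω, ⨅ i : Fin In, ⨆ l : Fin r, ‖b i l ω - a l‖ ^ (2 * p) ∂μ ≤
        (Real.log n / n) ^ (2 * p / (2 * p + 1)) +
          (2 : ℝ) ^ (2 * p) *
            (1 - ((2 : ℝ) ^ (r * d))⁻¹ * (Real.log n / n) ^ ((r * d : ℕ) / (2 * p + 1))) ^ In) ∧
    (∃ c₉₀ : ℝ, 0 < c₉₀ ∧ ∀ c₉ : ℝ, c₉₀ ≤ c₉ → ∃ c : ℝ, 0 < c ∧ ∃ n₀ : ℕ,
      ∀ (n : ℕ), n₀ ≤ n → ∀ (In : ℕ),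
        c₉ * (Real.log n) ^ 2 * ((n : ℝ) / Real.log n) ^ ((r * d : ℕ) / (2 * p + 1)) ≤ In →
      ∀ (a : Fin r → Fin d → ℝ), (∀ l i, a l i ∈ Set.Icc (-1 : ℝ) 1) →
      ∀ (Ω : Type) (mΩ : MeasurableSpace Ω) (μ : Measure Ω), IsProbabilityMeasure μ →
      ∀ (b : Fin In → Fin r → Ω → Fin d → ℝ), (∀ i l, Measurable (b i l)) →
      iIndepFun
        (fun il : Fin In × Fin r => b il.1 il.2) μ →
      (∀ i l, μ.map (b i l) = uniformCube d) →
      ∫ ω, ⨅ i : Fin In, ⨆ l : Fin r, ‖b i l ω - a l‖ ^ (2 * p) ∂μ ≤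
        c * (Real.log n / n) ^ (2 * p / (2 * p + 1))) := by
  have hs : 0 ≤ 2 * p := by positivity
  refine ⟨fun n hn In _ a ha Ω _ μ _ b hb hindep hmap ↦ ?_,
    2 ^ (r * d), by positivity, fun c₉ hc₉ ↦ ⟨1 + 2 ^ (2 * p), by positivity, 3, ?_⟩⟩
  · simpa only [Fintype.card_fin] using
      integral_iInf_iSup_norm_sub_rpow_le_log_div hs hn (fun l i _ ↦ ha l i) hb hindep hmap
  intro n hn In hIn a ha Ω _ μ _ b hb hindep hmap
  have hbound := integral_iInf_iSup_norm_sub_rpow_le_log_div hs (n := n) (by omega)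
    (fun l i _ ↦ ha l i) hb hindep hmap
  rw [Fintype.card_fin, Fintype.card_fin] at hbound
  have htail := one_sub_pow_le_rpow_log_div (α := 2 * p / (2 * p + 1)) hn (by positivity)
    (by positivity) ((div_le_one (by positivity)).2 (by linarith)) hc₉ hIn
  calc _ ≤ _ := hbound
    _ ≤ (Real.log n / n) ^ (2 * p / (2 * p + 1)) +
        2 ^ (2 * p) * (Real.log n / n) ^ (2 * p / (2 * p + 1)) := by gcongr
    _ = _ := by ring

/-- expected value of the `2p`-th power of the best sup-norm approximation of
the target directions by `I_n` independent uniform draws, and its consequence for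
sufficiently many repetitions. -/
theorem random_directions_expectation (d r : ℕ) (hd : 0 < d) (hr : 0 < r)
    (p : ℝ) (hp : 0 < p) :
    (∀ (n : ℕ), 2 ≤ n → ∀ (In : ℕ), 0 < In →
      ∀ (a : Fin r → Fin d → ℝ), (∀ l i, a l i ∈ Set.Icc (-1 : ℝ) 1) →
      ∀ (Ω : Type) (mΩ : MeasurableSpace Ω) (μ : Measure Ω), IsProbabilityMeasure μ →
      ∀ (b : Fin In → Fin r → Ω → Fin d → ℝ), (∀ i l, Measurable (b i l)) →
      iIndepFun
        (fun il : Fin In × Fin r => b il.1 il.2) μ →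
      (∀ i l, μ.map (b i l) = uniformCube d) →
      ∫ ω, ⨅ i : Fin In, ⨆ l : Fin r, ‖b i l ω - a l‖ ^ (2 * p) ∂μ ≤
        (Real.log n / n) ^ (2 * p / (2 * p + 1)) +
          (2 : ℝ) ^ (2 * p) *
            (1 - ((2 : ℝ) ^ (r * d))⁻¹ * (Real.log n / n) ^ ((r * d : ℕ) / (2 * p + 1))) ^ In) ∧
    (∃ c₉₀ : ℝ, 0 < c₉₀ ∧ ∀ c₉ : ℝ, c₉₀ ≤ c₉ → ∃ c : ℝ, 0 < c ∧ ∃ n₀ : ℕ,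
      ∀ (n : ℕ), n₀ ≤ n → ∀ (In : ℕ),
        c₉ * (Real.log n) ^ 2 * ((n : ℝ) / Real.log n) ^ ((r * d : ℕ) / (2 * p + 1)) ≤ In →
      ∀ (a : Fin r → Fin d → ℝ), (∀ l i, a l i ∈ Set.Icc (-1 : ℝ) 1) →
      ∀ (Ω : Type) (mΩ : MeasurableSpace Ω) (μ : Measure Ω), IsProbabilityMeasure μ →
      ∀ (b : Fin In → Fin r → Ω → Fin d → ℝ), (∀ i l, Measurable (b i l)) →
      iIndepFun
        (fun il : Fin In × Fin r => b il.1 il.2) μ →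
      (∀ i l, μ.map (b i l) = uniformCube d) →
      ∫ ω, ⨅ i : Fin In, ⨆ l : Fin r, ‖b i l ω - a l‖ ^ (2 * p) ∂μ ≤
        c * (Real.log n / n) ^ (2 * p / (2 * p + 1))) :=
  random_directions_expectation_general d r p hp
end

section
/- Let p = q + s with q ∈ ℕ₀ and s ∈ (0,1], let C > 0, let j ∈ {0, …, q}, and let g : ℝ → ℝ be q times continuously differentiable such that its j-th derivative g^{(j)} is (p−j, C)-smooth. Let A ≥ 1, u ∈ ℝ, a, b ∈ ℝ^d, and let P denote the Taylor polynomial of g^{(j)} of degree q − j around u. Then for every x ∈ [−A, A]^d: | (g^{(j)}(bᵀx)/j!)·((a − b)ᵀx)^j − (P(bᵀx)/j!)·((a − b)ᵀx)^j | ≤ (1/(q−j)!)·C·d^j·A^j·( max{ |bᵀx − u|, ‖a − b‖_∞ } )^p. -/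
/-!
The factor `((a - b)ᵀx)^j / j!` is common to both terms, so only `|g^{(j)}(y) - P(y)|` with
`y = bᵀx` has to be estimated. Taylor's theorem with Lagrange remainder of one order less
writes it as `(f^{(k)}(ξ) - f^{(k)}(u)) (y - u)^k / k!` for `f = g^{(j)}`, `k = q - j` and some
`ξ` between `u` and `y`, and the Hölder condition bounds this by `C |y - u|^{k + s} / k!`.
Finally `|(a - b)ᵀx| ≤ d A ‖a - b‖_∞`, and both `|y - u|` and `‖a - b‖_∞` are at most their
maximum, whose exponents add up to `k + s + j = p`.
-/

open Real Set Finset Nat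

theorem taylorWithinEval_eq_sum_iteratedDeriv {f : ℝ → ℝ} {n : ℕ} {s : Set ℝ} {x₀ : ℝ}
    (hf : ContDiff ℝ n f) (hs : UniqueDiffOn ℝ s) (hx₀ : x₀ ∈ s) (x : ℝ) :
    taylorWithinEval f n s x₀ x
      = ∑ m ∈ range (n + 1), iteratedDeriv m f x₀ / m ! * (x - x₀) ^ m := by
  rw [taylor_within_apply]
  refine sum_congr rfl fun m hm => ?_
  have hmn : (m : WithTop ℕ∞) ≤ n := by exact_mod_cast Nat.lt_succ_iff.mp (mem_range.mp hm)
  rw [iteratedDerivWithin_eq_iteratedDeriv hs (hf.contDiffAt.of_le hmn) hx₀, smul_eq_mul]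
  ring

theorem exists_sub_taylor_sum_eq {f : ℝ → ℝ} {k : ℕ} (hf : ContDiff ℝ k f) (u y : ℝ) :
    ∃ ξ ∈ uIcc u y, f y - ∑ m ∈ range (k + 1), iteratedDeriv m f u / m ! * (y - u) ^ m
      = (iteratedDeriv k f ξ - iteratedDeriv k f u) / k ! * (y - u) ^ k := by
  rcases eq_or_ne u y with rfl | huy
  · exact ⟨u, left_mem_uIcc, by simp [sum_range_succ']⟩
  cases k with
  | zero => exact ⟨y, right_mem_uIcc, by simp⟩
  | succ n =>
    obtain ⟨ξ, hξ, hrem⟩ := taylor_mean_remainder_lagrange_iteratedDeriv huy hf.contDiffOn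
    refine ⟨ξ, uIoo_subset_uIcc_self hξ, ?_⟩
    rw [taylorWithinEval_eq_sum_iteratedDeriv (hf.of_le (by exact_mod_cast n.le_succ))
      (uniqueDiffOn_uIcc huy) left_mem_uIcc] at hrem
    rw [sum_range_succ, ← sub_sub, hrem]
    ring

theorem abs_sub_taylor_sum_le_of_holder {f : ℝ → ℝ} {k : ℕ} (hf : ContDiff ℝ k f)
    {C s : ℝ} (hC : 0 ≤ C) (hs : 0 ≤ s)
    (hH : ∀ x z, |iteratedDeriv k f x - iteratedDeriv k f z| ≤ C * |x - z| ^ s) (u y : ℝ) :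
    |f y - ∑ m ∈ range (k + 1), iteratedDeriv m f u / m ! * (y - u) ^ m|
      ≤ C / k ! * |y - u| ^ ((k : ℝ) + s) := by
  obtain ⟨ξ, hξ, hrem⟩ := exists_sub_taylor_sum_eq hf u y
  have hξu : |ξ - u| ^ s ≤ |y - u| ^ s :=
    rpow_le_rpow (abs_nonneg _) (abs_sub_left_of_mem_uIcc hξ) hs
  rw [hrem, abs_mul, abs_div, abs_pow, Nat.abs_cast,
    rpow_add_of_nonneg (abs_nonneg _) k.cast_nonneg hs, rpow_natCast]
  calc |iteratedDeriv k f ξ - iteratedDeriv k f u| / k ! * |y - u| ^ k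
      ≤ C * |y - u| ^ s / k ! * |y - u| ^ k := by
        gcongr
        exact (hH ξ u).trans (by gcongr)
    _ = C / k ! * (|y - u| ^ k * |y - u| ^ s) := by ring

theorem abs_sum_mul_le_card_mul_norm {ι : Type*} [Fintype ι] (v x : ι → ℝ) {A : ℝ}
    (hx : ∀ i, |x i| ≤ A) : |∑ i, v i * x i| ≤ Fintype.card ι * A * ‖v‖ := by
  calc |∑ i, v i * x i| ≤ ∑ i, |v i * x i| := abs_sum_le_sum_abs _ _
    _ ≤ ∑ _i : ι, A * ‖v‖ := by
        refine sum_le_sum fun i _ => ?_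
        rw [abs_mul, mul_comm]
        exact mul_le_mul (hx i) (norm_le_pi_norm v i) (abs_nonneg _)
          ((abs_nonneg _).trans (hx i))
    _ = Fintype.card ι * A * ‖v‖ := by rw [sum_const, Finset.card_univ, nsmul_eq_mul, mul_assoc]

theorem taylor_term_bound_general (d q j : ℕ) (hj : j ≤ q)
    (s C p : ℝ) (hs : 0 < s) (hp : p = q + s) (hC : 0 < C)
    (g : ℝ → ℝ)
    -- `g^{(j)}` is `(p−j, C)`-smooth, i.e. `(q−j)` times continuously differentiable with
    -- `s`-Hölder `(q−j)`-th derivative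
    (hgj : ContDiff ℝ (q - j) (iteratedDeriv j g) ∧
      ∀ x z : ℝ, |iteratedDeriv (q - j) (iteratedDeriv j g) x
          - iteratedDeriv (q - j) (iteratedDeriv j g) z| ≤ C * |x - z| ^ s)
    (A : ℝ) (hA : 1 ≤ A) (u : ℝ) (a b : Fin d → ℝ)
    (P : ℝ → ℝ)
    (hP : ∀ y : ℝ, P y = ∑ m ∈ Finset.range (q - j + 1),
      (iteratedDeriv m (iteratedDeriv j g) u / (Nat.factorial m : ℝ)) * (y - u) ^ m) :
    ∀ x : Fin d → ℝ, (∀ i, x i ∈ Set.Icc (-A) A) →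
      |(iteratedDeriv j g (∑ i, b i * x i) / (Nat.factorial j : ℝ)) *
            (∑ i, (a i - b i) * x i) ^ j
          - (P (∑ i, b i * x i) / (Nat.factorial j : ℝ)) * (∑ i, (a i - b i) * x i) ^ j| ≤
        (1 / (Nat.factorial (q - j) : ℝ)) * C * (d : ℝ) ^ j * A ^ j *
          (max |(∑ i, b i * x i) - u| ‖a - b‖) ^ p := by
  intro x hx
  set y := ∑ i, b i * x i
  set M := max |y - u| ‖a - b‖
  have hM : 0 ≤ M := (abs_nonneg _).trans (le_max_left _ _)
  have hrem : |iteratedDeriv j g y - P y| ≤ C / (q - j)! * M ^ (((q - j : ℕ) : ℝ) + s) := by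
    rw [hP]
    refine (abs_sub_taylor_sum_le_of_holder (by exact_mod_cast hgj.1) hC.le hs.le hgj.2 u y).trans ?_
    gcongr
    exact le_max_left _ _
  have hdot : |∑ i, (a i - b i) * x i| ^ j ≤ d ^ j * A ^ j * M ^ j := by
    have hA0 : 0 ≤ A := zero_le_one.trans hA
    rw [← mul_pow, ← mul_pow]
    gcongr
    calc |∑ i, (a i - b i) * x i| ≤ d * A * ‖a - b‖ := by
          simpa using abs_sum_mul_le_card_mul_norm (a - b) x fun i => abs_le.mpr (hx i)
      _ ≤ d * A * M := by gcongr; exact le_max_right _ _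
  have hexp : M ^ (((q - j : ℕ) : ℝ) + s) * M ^ j = M ^ p := by
    rw [← rpow_natCast M j, ← rpow_add_of_nonneg hM (by positivity) j.cast_nonneg, hp,
      Nat.cast_sub hj]
    ring_nf
  calc _ = |iteratedDeriv j g y - P y| * |∑ i, (a i - b i) * x i| ^ j / j ! := by
        rw [← sub_mul, ← sub_div, abs_mul, abs_div, abs_pow, Nat.abs_cast, div_mul_eq_mul_div]
    _ ≤ |iteratedDeriv j g y - P y| * |∑ i, (a i - b i) * x i| ^ j :=
        div_le_self (by positivity) (by exact_mod_cast j.factorial_pos)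
    _ ≤ C / (q - j)! * M ^ (((q - j : ℕ) : ℝ) + s) * (d ^ j * A ^ j * M ^ j) := by
        gcongr
    _ = _ := by rw [← hexp]; ring

/-- Taylor remainder bound for one term of the expansion in the projection
pursuit approximation (part of the proof of Lemma 7). -/
theorem taylor_term_bound (d q j : ℕ) (hd : 0 < d) (hj : j ≤ q)
    (s C p : ℝ) (hs : 0 < s) (hs1 : s ≤ 1) (hp : p = q + s) (hC : 0 < C)
    (g : ℝ → ℝ) (hg : ContDiff ℝ q g)
    -- `g^{(j)}` is `(p−j, C)`-smooth, i.e. `(q−j)` times continuously differentiable with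
    -- `s`-Hölder `(q−j)`-th derivative
    (hgj : ContDiff ℝ (q - j) (iteratedDeriv j g) ∧
      ∀ x z : ℝ, |iteratedDeriv (q - j) (iteratedDeriv j g) x
          - iteratedDeriv (q - j) (iteratedDeriv j g) z| ≤ C * |x - z| ^ s)
    (A : ℝ) (hA : 1 ≤ A) (u : ℝ) (a b : Fin d → ℝ)
    (P : ℝ → ℝ)
    (hP : ∀ y : ℝ, P y = ∑ m ∈ Finset.range (q - j + 1),
      (iteratedDeriv m (iteratedDeriv j g) u / (Nat.factorial m : ℝ)) * (y - u) ^ m) :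
    ∀ x : Fin d → ℝ, (∀ i, x i ∈ Set.Icc (-A) A) →
      |(iteratedDeriv j g (∑ i, b i * x i) / (Nat.factorial j : ℝ)) *
            (∑ i, (a i - b i) * x i) ^ j
          - (P (∑ i, b i * x i) / (Nat.factorial j : ℝ)) * (∑ i, (a i - b i) * x i) ^ j| ≤
        (1 / (Nat.factorial (q - j) : ℝ)) * C * (d : ℝ) ^ j * A ^ j *
          (max |(∑ i, b i * x i) - u| ‖a - b‖) ^ p :=
  taylor_term_bound_general d q j hj s C p hs hp hC g hgj A hA u a b P hP
end
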